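/- arXiv:1801.04273 — 4 statements merged into one kernel-verified Lean document; each statement's English description precedes it below -/
import Mathlib

section
/- Let p be an odd prime and a, b nonnegative integers. Then C(p^a + p^b(p-1), p^a) ≡ 1 (mod p) if a ≠ b, and C(p^a + p^b(p-1), p^a) ≡ 0 (mod p) if a = b. -/
lemma choose_p_mul (p x y : ℕ) [Fact p.Prime] :
    Nat.choose (p * x) (p * y) ≡ Nat.choose x y [MOD p] := by
  have hp : 0 < p := (Fact.out : p.Prime).pos
  have := Choose.choose_modEq_choose_mod_mul_choose_div_nat (p := p) (n := p * x) (k := p * y)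
  simpa [Nat.mul_mod_right, Nat.mul_div_cancel_left _ hp] using this

lemma choose_pow_mul (p c x y : ℕ) [Fact p.Prime] :
    Nat.choose (p ^ c * x) (p ^ c * y) ≡ Nat.choose x y [MOD p] := by
  induction c with
  | zero => simp [Nat.ModEq.refl]
  | succ c ih =>
      have h1 : Nat.choose (p ^ (c+1) * x) (p ^ (c+1) * y) ≡
          Nat.choose (p ^ c * x) (p ^ c * y) [MOD p] := by
        have := choose_p_mul p (p ^ c * x) (p ^ c * y)
        simpa [pow_succ, mul_assoc, mul_comm, mul_left_comm] using this
      exact h1.trans ih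

theorem stmt4 (p a b : ℕ) (hp : p.Prime) (hodd : Odd p) :
    (a ≠ b → Nat.choose (p ^ a + p ^ b * (p - 1)) (p ^ a) ≡ 1 [MOD p]) ∧
      (a = b → Nat.choose (p ^ a + p ^ b * (p - 1)) (p ^ a) ≡ 0 [MOD p]) := by
  haveI : Fact p.Prime := ⟨hp⟩
  have hp2 : 2 ≤ p := hp.two_le
  constructor
  · intro hab
    rcases Nat.lt_or_ge a b with h | h
    · -- a < b : n = p^a * (1 + p^(b-a)*(p-1))
      have hb : p ^ b = p ^ a * p ^ (b - a) := by
        rw [← pow_add]; congr 1; omega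
      have hn : p ^ a + p ^ b * (p - 1) = p ^ a * (1 + p ^ (b - a) * (p - 1)) := by
        rw [hb]; ring
      have hk : p ^ a = p ^ a * 1 := by ring
      rw [hn]; nth_rewrite 2 [hk]
      have h1 := choose_pow_mul p a (1 + p ^ (b - a) * (p - 1)) 1
      refine h1.trans ?_
      rw [Nat.choose_one_right]
      have hba : 1 ≤ b - a := by omega
      have : p ∣ p ^ (b - a) * (p - 1) :=
        dvd_mul_of_dvd_left (dvd_pow_self p (by omega)) _
      calc 1 + p ^ (b - a) * (p - 1) ≡ 1 + 0 [MOD p] :=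
            Nat.ModEq.add_left 1 ((Nat.modEq_zero_iff_dvd).mpr this)
        _ = 1 := by ring
    · have hba : b < a := by omega
      set c := a - b with hc
      have hcpos : 1 ≤ c := by omega
      have ha : p ^ a = p ^ b * p ^ c := by rw [← pow_add]; congr 1; omega
      have hn : p ^ a + p ^ b * (p - 1) = p ^ b * (p ^ c + (p - 1)) := by
        rw [ha]; ring
      rw [hn, ha]
      refine (choose_pow_mul p b (p ^ c + (p - 1)) (p ^ c)).trans ?_
      -- one Lucas step on (p^c + (p-1), p^c)
      have hstep := Choose.choose_modEq_choose_mod_mul_choose_div_nat (p := p)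
        (n := p ^ c + (p - 1)) (k := p ^ c)
      have hpc : p ^ c = p * p ^ (c - 1) := by
        rw [← pow_succ']; congr 1; omega
      have hmodn : (p ^ c + (p - 1)) % p = p - 1 := by
        rw [hpc, Nat.mul_add_mod, Nat.mod_eq_of_lt (by omega)]
      have hdivn : (p ^ c + (p - 1)) / p = p ^ (c - 1) := by
        rw [hpc, Nat.mul_add_div (by omega : 0 < p), Nat.div_eq_of_lt (by omega)]; omega
      have hmodk : p ^ c % p = 0 := by
        rw [hpc]; exact Nat.mul_mod_right _ _
      have hdivk : p ^ c / p = p ^ (c - 1) := by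
        rw [hpc, Nat.mul_div_cancel_left _ (by omega : 0 < p)]
      rw [hmodn, hdivn, hmodk, hdivk] at hstep
      simpa using hstep
  · intro hab
    subst hab
    have hn : p ^ a + p ^ a * (p - 1) = p ^ (a + 1) := by
      have : p ^ a + p ^ a * (p - 1) = p ^ a * (1 + (p - 1)) := by ring
      rw [this, pow_succ]; congr 1; omega
    rw [hn]
    have hdvd : p ∣ Nat.choose (p ^ (a + 1)) (p ^ a) := by
      refine Nat.Prime.dvd_choose_pow hp (by positivity) ?_
      intro h
      have := Nat.pow_right_injective hp2 h
      omega
    exact (Nat.modEq_zero_iff_dvd).mpr hdvd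
end

section
/- Let A_n^r be the free abelian group on compositions [n_1,...,n_s] of n with s = n - r parts, and define δ: A_n^r → A_n^{r+1} by δ[n_1,...,n_s] = Σ_{l=1}^{s-1} (-1)^{l-1} P(n_l, n_{l+1}) [n_1,...,n_l + n_{l+1},...,n_s], where P(x,y) = 0 if x,y both odd and P(x,y) = C(⌊x/2⌋+⌊y/2⌋, ⌊x/2⌋) otherwise. Then δ ∘ δ = 0. -/
open Finsupp

noncomputable section

/-- `P x y`, as an integer. -/
def Pz (x y : ℕ) : ℤ :=
  if Odd x ∧ Odd y then 0 else (Nat.choose (x / 2 + y / 2) (x / 2) : ℤ)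

/-- `Q m`: `2` for even `m`, `0` for odd `m`. -/
def Qz (m : ℕ) : ℤ := if Even m then 2 else 0

/-- Merge the parts at positions `l` and `l+1` of a composition. -/
def mergeAt (L : List ℕ) (l : ℕ) : List ℕ :=
  L.take l ++ (L.getD l 0 + L.getD (l + 1) 0) :: L.drop (l + 2)

/-- Extend a map on basis elements to an additive map on the free abelian
group on compositions. -/
def liftOp (f : List ℕ → (List ℕ →₀ ℤ)) : (List ℕ →₀ ℤ) →+ (List ℕ →₀ ℤ) :=
  Finsupp.liftAddHom fun L => zmultiplesHom _ (f L)

/-- Value of the Fuks–Vainshtein differential `δ` on a composition. -/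
def dB (L : List ℕ) : List ℕ →₀ ℤ :=
  ∑ l ∈ Finset.range (L.length - 1),
    ((-1 : ℤ) ^ l * Pz (L.getD l 0) (L.getD (l + 1) 0)) • Finsupp.single (mergeAt L l) 1

/-- The differential `δ`. -/
def deltaOp : (List ℕ →₀ ℤ) →+ (List ℕ →₀ ℤ) := liftOp dB

/-- Value of Napolitano's operator `D` on a composition: decrease an even part
by one, with coefficient `2 · (-1)^(sum of preceding parts)`. -/
def DB (L : List ℕ) : List ℕ →₀ ℤ :=
  ∑ i ∈ Finset.range L.length,
    (Qz (L.getD i 0) * (-1 : ℤ) ^ ((L.take i).sum)) •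
      Finsupp.single (L.set i (L.getD i 0 - 1)) 1

/-- The operator `D`. -/
def DOp : (List ℕ →₀ ℤ) →+ (List ℕ →₀ ℤ) := liftOp DB

/-- Value of the operator `S` on a composition: insert a `1` at position `k`
and subtract `2` from a later part `i ≥ k`, with sign
`(-1)^(k + sum of the first k parts)` (1-indexed: `(-1)^{k+1+n_1+⋯+n_{k-1}}`);
terms where the decreased part would become `≤ 0` are omitted. -/
def SB (L : List ℕ) : List ℕ →₀ ℤ :=
  ∑ i ∈ Finset.range L.length, ∑ k ∈ Finset.range (i + 1),
    if 3 ≤ L.getD i 0 then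
      ((-1 : ℤ) ^ (k + (L.take k).sum)) •
        Finsupp.single (List.insertIdx (L.set i (L.getD i 0 - 2)) k 1) (1 : ℤ)
    else 0

/-- The operator `S`. -/
def SOp : (List ℕ →₀ ℤ) →+ (List ℕ →₀ ℤ) := liftOp SB

end

noncomputable section

def consHom (a : ℕ) : (List ℕ →₀ ℤ) →+ (List ℕ →₀ ℤ) :=
  liftOp (fun M => Finsupp.single (a :: M) 1)

def headMergeHom (a : ℕ) : (List ℕ →₀ ℤ) →+ (List ℕ →₀ ℤ) :=
  liftOp (fun M => match M with
    | [] => 0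
    | b :: T => Pz a b • Finsupp.single ((a + b) :: T) 1)

end

lemma liftOp_single (f : List ℕ → (List ℕ →₀ ℤ)) (L : List ℕ) (c : ℤ) :
    liftOp f (Finsupp.single L c) = c • f L := by
  simp [liftOp]

lemma consHom_single (a : ℕ) (L : List ℕ) (c : ℤ) :
    consHom a (Finsupp.single L c) = c • Finsupp.single (a :: L) 1 :=
  liftOp_single _ _ _

lemma headMergeHom_single_cons (a b : ℕ) (T : List ℕ) (c : ℤ) :
    headMergeHom a (Finsupp.single (b :: T) c)
      = c • (Pz a b • Finsupp.single ((a + b) :: T) 1) :=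
  liftOp_single _ _ _

lemma headMergeHom_single_nil (a : ℕ) (c : ℤ) :
    headMergeHom a (Finsupp.single ([] : List ℕ) c) = 0 := by
  rw [headMergeHom, liftOp_single]; simp

lemma deltaOp_single (L : List ℕ) (c : ℤ) :
    deltaOp (Finsupp.single L c) = c • dB L :=
  liftOp_single _ _ _

lemma dB_nil : dB [] = 0 := by simp [dB]
lemma dB_singleton (a : ℕ) : dB [a] = 0 := by simp [dB]

lemma mergeAt_cons_succ (a : ℕ) (M : List ℕ) (l : ℕ) :
    mergeAt (a :: M) (l + 1) = a :: mergeAt M l := by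
  simp [mergeAt]

lemma mergeAt_zero (a b : ℕ) (T : List ℕ) :
    mergeAt (a :: b :: T) 0 = (a + b) :: T := by
  simp [mergeAt]
lemma dB_cons_cons (a b : ℕ) (T : List ℕ) :
    dB (a :: b :: T) = Pz a b • Finsupp.single ((a + b) :: T) 1
      - consHom a (dB (b :: T)) := by
  have hs : consHom a (dB (b :: T)) = ∑ l ∈ Finset.range T.length,
      (((-1:ℤ)) ^ l * Pz ((b::T).getD l 0) ((b::T).getD (l+1) 0)) •
        Finsupp.single (a :: mergeAt (b :: T) l) 1 := by
    rw [dB, show (b :: T).length - 1 = T.length from rfl, map_sum]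
    refine Finset.sum_congr rfl fun l _ => ?_
    rw [map_zsmul, consHom_single, one_smul]
  rw [dB, show (a :: b :: T).length - 1 = T.length + 1 from rfl,
    Finset.sum_range_succ', hs, mergeAt_zero]
  simp only [pow_zero, one_mul, List.getD_cons_zero, List.getD_cons_succ]
  rw [sub_eq_add_neg, add_comm, ← Finset.sum_neg_distrib]
  congr 1
  refine Finset.sum_congr rfl fun l _ => ?_
  rw [mergeAt_cons_succ, ← neg_smul]
  congr 1
  ring

lemma delta_consHom (a : ℕ) (v : List ℕ →₀ ℤ) :
    deltaOp (consHom a v) = headMergeHom a v - consHom a (deltaOp v) := by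
  have h : deltaOp.comp (consHom a)
      = headMergeHom a - (consHom a).comp deltaOp := by
    apply Finsupp.addHom_ext
    intro M c
    simp only [AddMonoidHom.coe_comp, Function.comp_apply, AddMonoidHom.sub_apply]
    rw [consHom_single, map_zsmul, deltaOp_single, one_smul, deltaOp_single]
    cases M with
    | nil =>
      rw [headMergeHom_single_nil, dB_nil, dB_singleton]
      simp
    | cons b T =>
      rw [dB_cons_cons, headMergeHom_single_cons, map_zsmul, smul_sub]
  exact DFunLike.congr_fun h v

lemma headMerge_consHom (a b : ℕ) (v : List ℕ →₀ ℤ) :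
    headMergeHom a (consHom b v) = Pz a b • consHom (a + b) v := by
  have h : (headMergeHom a).comp (consHom b)
      = Pz a b • (consHom (a + b)) := by
    apply Finsupp.addHom_ext
    intro M c
    simp only [AddMonoidHom.coe_comp, Function.comp_apply, AddMonoidHom.smul_apply]
    rw [consHom_single, map_zsmul, headMergeHom_single_cons, one_smul,
      consHom_single, smul_comm]
  exact DFunLike.congr_fun h v

lemma choose_assoc (x y z : ℕ) :
    ((x+y).choose x : ℤ) * ((x+y+z).choose (x+y))
      = ((y+z).choose y) * ((x+y+z).choose x) := by
  have h1 : ((x+y).choose x : ℤ) * x.factorial * y.factorial = (x+y).factorial := by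
    exact_mod_cast congrArg (Nat.cast : ℕ → ℤ)
      (by simpa using Nat.choose_mul_factorial_mul_factorial (Nat.le_add_right x y))
  have h2 : ((x+y+z).choose (x+y) : ℤ) * (x+y).factorial * z.factorial = (x+y+z).factorial := by
    exact_mod_cast congrArg (Nat.cast : ℕ → ℤ)
      (by simpa using Nat.choose_mul_factorial_mul_factorial (Nat.le_add_right (x+y) z))
  have h3 : ((y+z).choose y : ℤ) * y.factorial * z.factorial = (y+z).factorial := by
    exact_mod_cast congrArg (Nat.cast : ℕ → ℤ)
      (by simpa using Nat.choose_mul_factorial_mul_factorial (Nat.le_add_right y z))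
  have h4 : ((x+y+z).choose x : ℤ) * x.factorial * (y+z).factorial = (x+y+z).factorial := by
    have := Nat.choose_mul_factorial_mul_factorial (Nat.le_add_right x (y+z))
    rw [Nat.add_sub_cancel_left, ← add_assoc] at this
    exact_mod_cast congrArg (Nat.cast : ℕ → ℤ) this
  have hpos : (0:ℤ) < x.factorial * y.factorial * z.factorial := by positivity
  have key : ((x+y).choose x : ℤ) * ((x+y+z).choose (x+y)) * (x.factorial * y.factorial * z.factorial)
      = ((y+z).choose y) * ((x+y+z).choose x) * (x.factorial * y.factorial * z.factorial) := by
    linear_combination (((x+y+z).choose (x+y) : ℤ) * z.factorial) * h1 + h2 - h4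
      - (((x+y+z).choose x : ℤ) * x.factorial) * h3
  exact mul_right_cancel₀ (ne_of_gt hpos) key


lemma Pz_assoc (a b c : ℕ) : Pz a b * Pz (a+b) c = Pz b c * Pz a (b+c) := by
  unfold Pz
  have hab : (a + b) % 2 = (a % 2 + b % 2) % 2 := Nat.add_mod a b 2
  have hbc : (b + c) % 2 = (b % 2 + c % 2) % 2 := Nat.add_mod b c 2
  rcases Nat.mod_two_eq_zero_or_one a with ha | ha <;>
    rcases Nat.mod_two_eq_zero_or_one b with hb | hb <;>
    rcases Nat.mod_two_eq_zero_or_one c with hc | hc <;>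
    simp only [Nat.odd_iff, hab, hbc, ha, hb, hc] <;>
    norm_num <;>
    (try (rw [show (a+b)/2 = a/2 + b/2 by omega, show (b+c)/2 = b/2 + c/2 by omega,
      show a/2 + (b/2 + c/2) = a/2 + b/2 + c/2 by ring]; exact choose_assoc _ _ _))
lemma delta_dB (L : List ℕ) : deltaOp (dB L) = 0 := by
  induction L with
  | nil => rw [dB_nil, map_zero]
  | cons a T IH =>
    match T with
    | [] => rw [dB_singleton, map_zero]
    | [b] =>
      rw [dB_cons_cons, map_sub, map_zsmul, deltaOp_single, one_smul,
        dB_singleton, dB_singleton, map_zero, map_zero]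
      simp
    | b :: c :: U =>
      rw [dB_cons_cons, map_sub, map_zsmul, deltaOp_single, one_smul,
        delta_consHom, IH, map_zero, sub_zero]
      rw [dB_cons_cons (a+b) c U, dB_cons_cons b c U, map_sub, map_zsmul,
        headMergeHom_single_cons, one_smul, headMerge_consHom, smul_sub]
      rw [smul_smul, smul_smul, Pz_assoc, ← add_assoc]
      abel

theorem stmt6 (L : List ℕ) (hL : ∀ m ∈ L, 0 < m) :
    deltaOp (deltaOp (Finsupp.single L (1 : ℤ))) = 0 := by
  rw [deltaOp_single, one_smul]
  exact delta_dB L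
end

section
/- Define B_p(n,r) as the number of pairs of sequences (1 ≤ a_1 ≤ ... ≤ a_g, 0 ≤ b_1 < ... < b_h) of integers such that 2Σ_i p^{a_i} + 2Σ_j p^{b_j} - 2g - h = r and 2Σ_i p^{a_i} + 2Σ_j p^{b_j} ≤ n. Then for all n ≥ 2r + 2, B_p(n,r) = B_p(n+1,r). -/
/-- `B_p(n,r)`: the number of pairs of sequences
`1 ≤ a_1 ≤ ⋯ ≤ a_g` (recorded as a multiset of positive integers) and
`0 ≤ b_1 < ⋯ < b_h` (recorded as a finset of naturals) with
`2∑ p^{a_i} + 2∑ p^{b_j} - 2g - h = r` and `2∑ p^{a_i} + 2∑ p^{b_j} ≤ n`. -/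
noncomputable def Bcount (p n r : ℕ) : ℕ :=
  Set.ncard {x : Multiset ℕ × Finset ℕ |
    (∀ a ∈ x.1, 1 ≤ a) ∧
    2 * (x.1.map fun a => p ^ a).sum + 2 * ∑ b ∈ x.2, p ^ b
      = r + 2 * Multiset.card x.1 + x.2.card ∧
    2 * (x.1.map fun a => p ^ a).sum + 2 * ∑ b ∈ x.2, p ^ b ≤ n}

theorem stmt9 (p n r : ℕ) (hp : p.Prime) (h : 2 * r + 2 ≤ n) :
    Bcount p n r = Bcount p (n + 1) r := by
  unfold Bcount
  congr 1
  ext x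
  simp only [Set.mem_setOf_eq]
  have key : ∀ (hpos : ∀ a ∈ x.1, 1 ≤ a),
      2 * (x.1.map fun a => p ^ a).sum + 2 * ∑ b ∈ x.2, p ^ b
        = r + 2 * Multiset.card x.1 + x.2.card →
      2 * (x.1.map fun a => p ^ a).sum + 2 * ∑ b ∈ x.2, p ^ b ≤ 2 * r := by
    intro hpos heq
    have h1 : Multiset.card x.1 * 2 ≤ (x.1.map fun a => p ^ a).sum := by
      have := Multiset.card_nsmul_le_sum (s := x.1.map fun a => p ^ a) (a := 2) ?_
      · simpa [smul_eq_mul] using this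
      · intro y hy
        obtain ⟨a, ha, rfl⟩ := Multiset.mem_map.1 hy
        calc 2 ≤ p := hp.two_le
        _ = p ^ 1 := (pow_one p).symm
        _ ≤ p ^ a := Nat.pow_le_pow_right hp.pos (hpos a ha)
    have h2 : x.2.card ≤ ∑ b ∈ x.2, p ^ b := by
      calc x.2.card = ∑ _b ∈ x.2, 1 := by simp
      _ ≤ ∑ b ∈ x.2, p ^ b := Finset.sum_le_sum fun b _ => Nat.one_le_pow _ _ hp.pos
    omega
  constructor
  · rintro ⟨h1, h2, h3⟩
    exact ⟨h1, h2, h3.trans (Nat.le_succ n)⟩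
  · rintro ⟨h1, h2, _⟩
    exact ⟨h1, h2, (key h1 h2).trans (by omega)⟩
end

section
/- Define B'_p(n,r) as the number of pairs of sequences (1 ≤ a_1 ≤ ... ≤ a_g, 1 ≤ b_1 < ... < b_h) with 2Σ_i p^{a_i} + 2Σ_j p^{b_j} + 1 - 2g - h = r, 2Σ_i p^{a_i} + 2Σ_j p^{b_j} + 2 ≤ n, and p ∤ 2(n - 2Σ_i p^{a_i} - 2Σ_j p^{b_j} - 1). Then for all n ≥ 2r + 2, B'_p(n + p, r) = B'_p(n, r). -/
/-- `B'_p(n,r)`: the number of pairs of sequences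
`1 ≤ a_1 ≤ ⋯ ≤ a_g` (a multiset of positive integers) and
`1 ≤ b_1 < ⋯ < b_h` (a finset of positive integers) with
`2∑ p^{a_i} + 2∑ p^{b_j} + 1 - 2g - h = r`, `2∑ p^{a_i} + 2∑ p^{b_j} + 2 ≤ n`
and `p ∤ 2(n - 2∑ p^{a_i} - 2∑ p^{b_j} - 1)`. -/
noncomputable def B'count (p n r : ℕ) : ℕ :=
  Set.ncard {x : Multiset ℕ × Finset ℕ |
    (∀ a ∈ x.1, 1 ≤ a) ∧ (∀ b ∈ x.2, 1 ≤ b) ∧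
    2 * (x.1.map fun a => p ^ a).sum + 2 * ∑ b ∈ x.2, p ^ b + 1
      = r + 2 * Multiset.card x.1 + x.2.card ∧
    2 * (x.1.map fun a => p ^ a).sum + 2 * ∑ b ∈ x.2, p ^ b + 2 ≤ n ∧
    ¬ p ∣ 2 * (n - 2 * (x.1.map fun a => p ^ a).sum - 2 * ∑ b ∈ x.2, p ^ b - 1)}

theorem stmt11 (p n r : ℕ) (hp : p.Prime) (h : 2 * r + 2 ≤ n) :
    B'count p (n + p) r = B'count p n r := by
  unfold B'count
  congr 1
  ext x
  simp only [Set.mem_setOf_eq]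
  have hp2 : 2 ≤ p := hp.two_le
  -- key bound: from the sum equation, the total is at most 2r
  have key : ∀ (h1 : ∀ a ∈ x.1, 1 ≤ a) (h2 : ∀ b ∈ x.2, 1 ≤ b),
      2 * (x.1.map fun a => p ^ a).sum + 2 * ∑ b ∈ x.2, p ^ b + 1
        = r + 2 * Multiset.card x.1 + x.2.card →
      2 * (x.1.map fun a => p ^ a).sum + 2 * ∑ b ∈ x.2, p ^ b + 2 ≤ 2 * r := by
    intro h1 h2 h3
    have hS : 2 * Multiset.card x.1 ≤ (x.1.map fun a => p ^ a).sum := by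
      have := Multiset.card_nsmul_le_sum (s := x.1.map fun a => p ^ a) (a := 2) ?_
      · simpa [Multiset.card_map, smul_eq_mul, mul_comm] using this
      · intro y hy
        obtain ⟨a, ha, rfl⟩ := Multiset.mem_map.mp hy
        calc 2 ≤ p := hp2
        _ = p ^ 1 := (pow_one p).symm
        _ ≤ p ^ a := Nat.pow_le_pow_right (by omega) (h1 a ha)
    have hT : 2 * x.2.card ≤ ∑ b ∈ x.2, p ^ b := by
      have := Finset.card_nsmul_le_sum x.2 (fun b => p ^ b) 2 ?_
      · simpa [smul_eq_mul, mul_comm] using this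
      · intro b hb
        calc 2 ≤ p := hp2
        _ = p ^ 1 := (pow_one p).symm
        _ ≤ p ^ b := Nat.pow_le_pow_right (by omega) (h2 b hb)
    omega
  constructor
  · rintro ⟨h1, h2, h3, h4, h5⟩
    have hk := key h1 h2 h3
    refine ⟨h1, h2, h3, by omega, ?_⟩
    intro hd
    apply h5
    have heq : 2 * (n + p - 2 * (x.1.map fun a => p ^ a).sum - 2 * ∑ b ∈ x.2, p ^ b - 1)
        = p * 2 + 2 * (n - 2 * (x.1.map fun a => p ^ a).sum - 2 * ∑ b ∈ x.2, p ^ b - 1) := by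
      omega
    rw [heq]
    exact Nat.dvd_add (Dvd.intro 2 rfl) hd
  · rintro ⟨h1, h2, h3, h4, h5⟩
    have hk := key h1 h2 h3
    refine ⟨h1, h2, h3, by omega, ?_⟩
    intro hd
    apply h5
    have heq : 2 * (n + p - 2 * (x.1.map fun a => p ^ a).sum - 2 * ∑ b ∈ x.2, p ^ b - 1)
        = p * 2 + 2 * (n - 2 * (x.1.map fun a => p ^ a).sum - 2 * ∑ b ∈ x.2, p ^ b - 1) := by
      omega
    rw [heq] at hd
    exact (Nat.dvd_add_right (Dvd.intro 2 rfl)).mp hd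
end
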